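/- Let Φ be an irreducible reduced crystallographic simply-laced root system with base Δ and highest root θ; let α ∈ Δ be an extreme Heisenberg root with neighbour β, and set δ := θ − α − β. Then for every ε ∈ Ψ_α with ε ≠ δ one has ⟨ε,β⟩ ∈ {0,1}; equivalently, writing Z := β^∨ + S_α/2 (so that ε(Z) = ⟨ε,β⟩ + c_α(ε)), one has ε(Z) ∈ {1,2}. -/

import Mathlib

/-!
If `⟪ε, β⟫ = -1`, then `ε + β` is a root with `α`-coefficient `1` and `⟪ε + β, α⟫ = ⟪ε, α⟫ - 1 ≤ -1`,
so `ε + β + α` is again a root; its `α`-coefficient is `2`, hence it is `θ` by the Heisenberg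
property, i.e. `ε = θ - α - β`. Since `ε ≠ ±β` (their `α`-coefficients differ), `⟪ε, β⟫ ∈ {-1, 0, 1}`,
which leaves `{0, 1}`.
-/

open scoped InnerProductSpace

namespace PaperRS

variable {E : Type*} [NormedAddCommGroup E] [InnerProductSpace ℝ E]

/-- A reduced crystallographic simply-laced root system, normalized so that every root has
squared length `2` (hence `⟪δ, ε⟫` is the Cartan integer `⟨δ, ε^∨⟩`). -/
structure IsRootSystem (Φ : Set E) : Prop where
  finite : Φ.Finite
  nonzero : (0 : E) ∉ Φ
  span_top : Submodule.span ℝ Φ = ⊤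
  norm_two : ∀ α ∈ Φ, ⟪α, α⟫_ℝ = 2
  reduced : ∀ α ∈ Φ, ∀ t : ℝ, t • α ∈ Φ → t = 1 ∨ t = -1
  cartan_int : ∀ α ∈ Φ, ∀ β ∈ Φ, ∃ n : ℤ, ⟪α, β⟫_ℝ = (n : ℝ)
  reflect_mem : ∀ α ∈ Φ, ∀ β ∈ Φ, β - ⟪β, α⟫_ℝ • α ∈ Φ

/-- Irreducibility: `Φ` is nonempty and cannot be split into two mutually orthogonal parts. -/
def IsIrreducible (Φ : Set E) : Prop :=
  Φ.Nonempty ∧ ∀ Φ₁ Φ₂ : Set E, Φ = Φ₁ ∪ Φ₂ →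
    (∀ a ∈ Φ₁, ∀ b ∈ Φ₂, ⟪a, b⟫_ℝ = 0) → Φ₁ = ∅ ∨ Φ₂ = ∅

/-- The reflection in (the hyperplane orthogonal to) a root `α` of squared length `2`. -/
def sRefl (α : E) : Function.End E := fun x => x - ⟪x, α⟫_ℝ • α

/-- The group generated by the reflections in the elements of `S`; since every reflection is
an involution, the submonoid generated by the reflections coincides with the generated group. -/
def genBy (S : Set E) : Submonoid (Function.End E) :=
  Submonoid.closure (sRefl '' S)

/-- The Weyl group of `Φ`: the group generated by the reflections in all the roots. -/
abbrev WeylGroup (Φ : Set E) : Submonoid (Function.End E) := genBy Φ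

/-- A base (set of simple roots) of `Φ`, together with the (unique) integer coefficients
`coeff δ γ` of each root `δ` with respect to the simple roots. -/
structure Base (Φ : Set E) where
  Δ : Finset E
  coeff : E → E → ℤ
  subset : ↑Δ ⊆ Φ
  indep : LinearIndependent ℝ (fun γ : {x : E // x ∈ Δ} => (γ : E))
  expand : ∀ δ ∈ Φ, δ = ∑ γ ∈ Δ, (coeff δ γ : ℝ) • γ
  sign : ∀ δ ∈ Φ, (∀ γ ∈ Δ, 0 ≤ coeff δ γ) ∨ (∀ γ ∈ Δ, coeff δ γ ≤ 0)

variable {Φ : Set E}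

/-- `θ` is the highest root of `Φ` with respect to the base `B`. -/
def IsHighest (B : Base Φ) (θ : E) : Prop :=
  θ ∈ Φ ∧ ∀ δ ∈ Φ, ∀ γ ∈ B.Δ, B.coeff δ γ ≤ B.coeff θ γ

/-- `α` is a Heisenberg simple root: the highest root `θ` has `α`-coefficient `2`, and every
root other than `±θ` has `α`-coefficient in `{-1, 0, 1}`. -/
def IsHeisenberg (B : Base Φ) (θ α : E) : Prop :=
  B.coeff θ α = 2 ∧
    ∀ δ ∈ Φ, δ ≠ θ → δ ≠ -θ →
      B.coeff δ α = -1 ∨ B.coeff δ α = 0 ∨ B.coeff δ α = 1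

/-- `α` is an extreme simple root with (unique) neighbour `β`. -/
def IsExtreme (B : Base Φ) (α β : E) : Prop :=
  β ∈ B.Δ ∧ β ≠ α ∧ ⟪α, β⟫_ℝ ≠ 0 ∧
    ∀ γ ∈ B.Δ, γ ≠ α → ⟪α, γ⟫_ℝ ≠ 0 → γ = β

/-- `Φ_α`: the roots with `α`-coefficient `1` that are orthogonal to `α`. -/
def PhiSet (B : Base Φ) (α : E) : Set E :=
  {ε ∈ Φ | B.coeff ε α = 1 ∧ ⟪ε, α⟫_ℝ = 0}

/-- `Ψ_α`: the roots `ε` with `α`-coefficient `1` and `⟪ε, α⟫ ≤ 0`. -/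
def PsiSet (B : Base Φ) (α : E) : Set E :=
  {ε ∈ Φ | B.coeff ε α = 1 ∧ ⟪ε, α⟫_ℝ ≤ 0}

theorem IsRootSystem.neg_mem (hΦ : IsRootSystem Φ) {δ : E} (hδ : δ ∈ Φ) : -δ ∈ Φ := by
  have h := hΦ.reflect_mem δ hδ δ hδ
  rwa [hΦ.norm_two δ hδ, two_smul, sub_add_cancel_left] at h

theorem IsRootSystem.add_mem_of_inner_eq_neg_one (hΦ : IsRootSystem Φ) {δ ε : E} (hδ : δ ∈ Φ)
    (hε : ε ∈ Φ) (h : ⟪δ, ε⟫_ℝ = -1) : δ + ε ∈ Φ := by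
  simpa [h] using hΦ.reflect_mem ε hε δ hδ

theorem IsRootSystem.sub_mem_of_inner_eq_one (hΦ : IsRootSystem Φ) {δ ε : E} (hδ : δ ∈ Φ)
    (hε : ε ∈ Φ) (h : ⟪δ, ε⟫_ℝ = 1) : δ - ε ∈ Φ := by
  simpa [h] using hΦ.reflect_mem ε hε δ hδ

theorem IsRootSystem.neg_one_le_inner (hΦ : IsRootSystem Φ) {δ ε : E} (hδ : δ ∈ Φ)
    (hε : ε ∈ Φ) (hne : δ ≠ -ε) : -1 ≤ ⟪δ, ε⟫_ℝ := by
  obtain ⟨n, hn⟩ := hΦ.cartan_int δ hδ ε hε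
  have hpos : 0 < ⟪δ + ε, δ + ε⟫_ℝ :=
    real_inner_self_pos.mpr fun h => hne (eq_neg_of_add_eq_zero_left h)
  rw [real_inner_add_add_self, hΦ.norm_two δ hδ, hΦ.norm_two ε hε, hn] at hpos
  have : -2 < n := by exact_mod_cast (by linarith : (-2 : ℝ) < n)
  rw [hn]
  exact_mod_cast (by omega : -1 ≤ n)

theorem IsRootSystem.inner_le_one (hΦ : IsRootSystem Φ) {δ ε : E} (hδ : δ ∈ Φ)
    (hε : ε ∈ Φ) (hne : δ ≠ ε) : ⟪δ, ε⟫_ℝ ≤ 1 := by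
  have := hΦ.neg_one_le_inner hδ (hΦ.neg_mem hε) (by rwa [neg_neg])
  rw [inner_neg_right] at this
  linarith

theorem IsRootSystem.inner_eq_neg_one_or_zero_or_one (hΦ : IsRootSystem Φ) {δ ε : E}
    (hδ : δ ∈ Φ) (hε : ε ∈ Φ) (h₁ : δ ≠ ε) (h₂ : δ ≠ -ε) :
    ⟪δ, ε⟫_ℝ = -1 ∨ ⟪δ, ε⟫_ℝ = 0 ∨ ⟪δ, ε⟫_ℝ = 1 := by
  obtain ⟨n, hn⟩ := hΦ.cartan_int δ hδ ε hε
  have hlo := hΦ.neg_one_le_inner hδ hε h₂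
  have hhi := hΦ.inner_le_one hδ hε h₁
  rw [hn] at hlo hhi ⊢
  have : -1 ≤ n := by exact_mod_cast hlo
  have : n ≤ 1 := by exact_mod_cast hhi
  interval_cases n <;> norm_num

namespace Base

variable (B : Base Φ)

theorem coeff_eq_of_eq_sum {δ : E} (hδ : δ ∈ Φ) {c : E → ℝ}
    (h : δ = ∑ γ ∈ B.Δ, c γ • γ) {γ : E} (hγ : γ ∈ B.Δ) : (B.coeff δ γ : ℝ) = c γ := by
  refine Fintype.linearIndependent_iffₛ.mp B.indep (fun γ => B.coeff δ γ) (fun γ => c γ) ?_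
    ⟨γ, hγ⟩
  rw [Finset.sum_coe_sort B.Δ (fun γ => (B.coeff δ γ : ℝ) • γ),
    Finset.sum_coe_sort B.Δ (fun γ => c γ • γ), ← B.expand δ hδ, ← h]

theorem coeff_add {δ ε : E} (hδ : δ ∈ Φ) (hε : ε ∈ Φ) (hδε : δ + ε ∈ Φ) {γ : E}
    (hγ : γ ∈ B.Δ) : B.coeff (δ + ε) γ = B.coeff δ γ + B.coeff ε γ := by
  have := B.coeff_eq_of_eq_sum hδε (c := fun γ => (B.coeff δ γ : ℝ) + B.coeff ε γ)
    (by simp only [add_smul, Finset.sum_add_distrib, ← B.expand δ hδ, ← B.expand ε hε]) hγ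
  exact_mod_cast this

theorem coeff_sub {δ ε : E} (hδ : δ ∈ Φ) (hε : ε ∈ Φ) (hδε : δ - ε ∈ Φ) {γ : E}
    (hγ : γ ∈ B.Δ) : B.coeff (δ - ε) γ = B.coeff δ γ - B.coeff ε γ := by
  have := B.coeff_add hδε hε (by rwa [sub_add_cancel]) hγ
  rw [sub_add_cancel] at this
  omega

theorem coeff_neg (hΦ : IsRootSystem Φ) {δ : E} (hδ : δ ∈ Φ) {γ : E} (hγ : γ ∈ B.Δ) :
    B.coeff (-δ) γ = -B.coeff δ γ := by
  have := B.coeff_eq_of_eq_sum (hΦ.neg_mem hδ) (c := fun γ => -(B.coeff δ γ : ℝ))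
    (by simp only [neg_smul, Finset.sum_neg_distrib, ← B.expand δ hδ]) hγ
  exact_mod_cast this

open Classical in
theorem coeff_of_mem {β γ : E} (hβ : β ∈ B.Δ) (hγ : γ ∈ B.Δ) :
    B.coeff β γ = if γ = β then 1 else 0 := by
  have := B.coeff_eq_of_eq_sum (B.subset hβ) (c := fun γ => if γ = β then 1 else 0)
    (by simp [ite_smul, hβ]) hγ
  exact_mod_cast this

theorem coeff_self {β : E} (hβ : β ∈ B.Δ) : B.coeff β β = 1 := by
  simp [B.coeff_of_mem hβ hβ]

theorem coeff_of_ne {β γ : E} (hβ : β ∈ B.Δ) (hγ : γ ∈ B.Δ) (hne : γ ≠ β) :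
    B.coeff β γ = 0 := by
  simp [B.coeff_of_mem hβ hγ, hne]

end Base

theorem Base.ne_neg_of_mem (hΦ : IsRootSystem Φ) (B : Base Φ) {β γ : E} (hβ : β ∈ B.Δ)
    (hγ : γ ∈ B.Δ) : β ≠ -γ := by
  intro h
  have hc := B.coeff_neg hΦ (B.subset hγ) hγ
  rw [← h, B.coeff_self hγ, B.coeff_of_mem hβ hγ] at hc
  split_ifs at hc

theorem Base.inner_eq_neg_one_or_zero_of_ne (hΦ : IsRootSystem Φ) (B : Base Φ) {α β : E}
    (hα : α ∈ B.Δ) (hβ : β ∈ B.Δ) (hne : α ≠ β) : ⟪α, β⟫_ℝ = -1 ∨ ⟪α, β⟫_ℝ = 0 := by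
  rcases hΦ.inner_eq_neg_one_or_zero_or_one (B.subset hα) (B.subset hβ) hne
    (B.ne_neg_of_mem hΦ hα hβ) with h | h | h
  · exact Or.inl h
  · exact Or.inr h
  -- otherwise `β - α` would be a root with coefficients of both signs
  · have hmem := hΦ.sub_mem_of_inner_eq_one (B.subset hβ) (B.subset hα)
      (by rwa [real_inner_comm])
    have hcβ := B.coeff_sub (B.subset hβ) (B.subset hα) hmem hβ
    have hcα := B.coeff_sub (B.subset hβ) (B.subset hα) hmem hα
    rw [B.coeff_self hβ, B.coeff_of_ne hα hβ hne.symm] at hcβ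
    rw [B.coeff_self hα, B.coeff_of_ne hβ hα hne] at hcα
    rcases B.sign _ hmem with hs | hs
    · have := hs α hα; omega
    · have := hs β hβ; omega

theorem IsHeisenberg.eq_of_coeff_eq_two (hΦ : IsRootSystem Φ) {B : Base Φ} {θ α : E}
    (hH : IsHeisenberg B θ α) (hα : α ∈ B.Δ) {δ : E} (hδ : δ ∈ Φ) (h2 : B.coeff δ α = 2) :
    δ = θ := by
  by_contra hδθ
  have hδnθ : δ ≠ -θ := by
    rintro rfl
    have := B.coeff_neg hΦ hδ hα
    rw [neg_neg, hH.1, h2] at this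
    omega
  rcases hH.2 δ hδ hδθ hδnθ with h | h | h <;> omega

theorem IsHeisenberg.add_add_eq_of_inner_eq_neg_one (hΦ : IsRootSystem Φ) {B : Base Φ}
    {θ α β ε : E} (hH : IsHeisenberg B θ α) (hα : α ∈ B.Δ) (hβ : β ∈ B.Δ)
    (hαβ : ⟪α, β⟫_ℝ = -1) (hε : ε ∈ PsiSet B α) (hεβ : ⟪ε, β⟫_ℝ = -1) :
    ε + β + α = θ := by
  obtain ⟨hεΦ, hcε, hεα⟩ := hε
  have hβα : α ≠ β := by
    rintro rfl
    linarith [hΦ.norm_two α (B.subset hα)]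
  have hη := hΦ.add_mem_of_inner_eq_neg_one hεΦ (B.subset hβ) hεβ
  have hcη : B.coeff (ε + β) α = 1 := by
    rw [B.coeff_add hεΦ (B.subset hβ) hη hα, hcε, B.coeff_of_ne hβ hα hβα, add_zero]
  have hηα : ⟪ε + β, α⟫_ℝ = -1 := by
    have hne : ε + β ≠ -α := by
      intro h
      have := B.coeff_neg hΦ (B.subset hα) hα
      rw [← h, hcη, B.coeff_self hα] at this
      omega
    have := hΦ.neg_one_le_inner hη (B.subset hα) hne
    rw [inner_add_left, real_inner_comm α β, hαβ] at this ⊢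
    linarith
  have hζ := hΦ.add_mem_of_inner_eq_neg_one hη (B.subset hα) hηα
  refine hH.eq_of_coeff_eq_two hΦ hα hζ ?_
  rw [B.coeff_add hη (B.subset hα) hζ hα, hcη, B.coeff_self hα]
  rfl

theorem pairing_with_beta_of_mem_psiSet_general
    (hΦ : IsRootSystem Φ) (B : Base Φ)
    {θ α β : E} (hα : α ∈ B.Δ)
    (hext : IsExtreme B α β) (hH : IsHeisenberg B θ α)
    {ε : E} (hε : ε ∈ PsiSet B α) (hne : ε ≠ θ - α - β) :
    (⟪ε, β⟫_ℝ = 0 ∨ ⟪ε, β⟫_ℝ = 1) ∧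
      (⟪ε, β⟫_ℝ + (B.coeff ε α : ℝ) = 1 ∨ ⟪ε, β⟫_ℝ + (B.coeff ε α : ℝ) = 2) := by
  obtain ⟨hβ, hβα, hαβ0, -⟩ := hext
  have hαβ : ⟪α, β⟫_ℝ = -1 :=
    (B.inner_eq_neg_one_or_zero_of_ne hΦ hα hβ hβα.symm).resolve_right hαβ0
  have hcε : B.coeff ε α = 1 := hε.2.1
  have hcβ := B.coeff_of_ne hβ hα hβα.symm
  have hcnβ := B.coeff_neg hΦ (B.subset hβ) hα
  have hεβ : ⟪ε, β⟫_ℝ = 0 ∨ ⟪ε, β⟫_ℝ = 1 := by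
    rcases hΦ.inner_eq_neg_one_or_zero_or_one hε.1 (B.subset hβ) (by rintro rfl; omega)
      (by rintro rfl; omega) with h | h
    · refine absurd ?_ hne
      rw [← hH.add_add_eq_of_inner_eq_neg_one hΦ hα hβ hαβ hε h]
      abel
    · exact h
  refine ⟨hεβ, ?_⟩
  rw [hcε, Int.cast_one]
  rcases hεβ with h | h
  · exact Or.inl (by rw [h, zero_add])
  · exact Or.inr (by rw [h]; norm_num)

/-- For an extreme Heisenberg root `α` with neighbour `β` and `δ := θ - α - β`:
every `ε ∈ Ψ_α` with `ε ≠ δ` has `⟪ε, β⟫ ∈ {0, 1}`; equivalently, writing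
`ε(Z) = ⟪ε, β⟫ + c_α(ε)` for `Z = β^∨ + S_α/2`, one has `ε(Z) ∈ {1, 2}`. -/
theorem pairing_with_beta_of_mem_psiSet
    (hΦ : IsRootSystem Φ) (hirr : IsIrreducible Φ) (B : Base Φ)
    {θ α β : E} (hθ : IsHighest B θ) (hα : α ∈ B.Δ)
    (hext : IsExtreme B α β) (hH : IsHeisenberg B θ α)
    {ε : E} (hε : ε ∈ PsiSet B α) (hne : ε ≠ θ - α - β) :
    (⟪ε, β⟫_ℝ = 0 ∨ ⟪ε, β⟫_ℝ = 1) ∧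
      (⟪ε, β⟫_ℝ + (B.coeff ε α : ℝ) = 1 ∨ ⟪ε, β⟫_ℝ + (B.coeff ε α : ℝ) = 2) :=
  pairing_with_beta_of_mem_psiSet_general hΦ B hα hext hH hε hne

end PaperRS
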